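/- arXiv:1310.6384 — 3 statements merged into one kernel-verified Lean document; each statement's English description precedes it below -/
import Mathlib

section
/- Let G be a normal subgroup of a finite group H, with quotient Q = H/Q and quotient map j, and fix a section s: Q → H of j. For q ∈ Q and an irreducible complex representation ρ of G, let q([ρ]) denote the isomorphism class of g ↦ ρ(s(q)gs(q)⁻¹), and let χ_ρ denote the character of ρ. Then for all g₁, g₂ ∈ G: ∑_{[ρ] ∈ Ĝ} ∑_{q ∈ Q} χ_ρ(g₁⁻¹) · χ_{q([ρ])}(g₂) equals |C_H(g₁)| if g₁ and g₂ are conjugate in H, and 0 otherwise. -/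
/-!
Column orthogonality for `G`, in the form `∑ ρ, χ_ρ(a⁻¹) χ_ρ(b) = #{c ∈ G | c b c⁻¹ = a}`, turns
the `q`-th summand into the number of `u ∈ G` with `u (s q) g₂ (s q)⁻¹ u⁻¹ = g₁`. Every `h ∈ H` is
uniquely `u * s q`, so summing over `q` counts the `h ∈ H` with `h g₂ h⁻¹ = g₁`: a coset of
`C_H(g₁)` if `g₁` and `g₂` are conjugate in `H`, and nothing otherwise.

Column orthogonality follows from row orthogonality once a class function `f` orthogonal to every
irreducible character is known to vanish. Such an `f` gives the central element
`z = ∑ x, f x⁻¹ • x` of `k[G]`; by Schur's lemma `z` acts on a simple `k[G]`-module as a scalar, of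
trace `∑ x, f x * χ(x⁻¹) = 0`, so `z` kills every simple module and hence the semisimple ring `k[G]`.
-/

open CategoryTheory Finset
open scoped MonoidAlgebra

universe u

section Conjugation

variable {G : Type*} [Group G]

open scoped Classical in
theorem card_conj_eq_ite [Finite G] (a b : G) :
    Nat.card {c // c * b * c⁻¹ = a} =
      if IsConj a b then Nat.card (Subgroup.centralizer {a}) else 0 := by
  split_ifs with h
  · obtain ⟨c₀, rfl⟩ := isConj_iff.mp (isConj_comm.mp h)
    refine Nat.card_congr ((Equiv.mulRight c₀⁻¹).subtypeEquiv fun c => ?_)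
    have hconj : c * c₀⁻¹ * (c₀ * b * c₀⁻¹) * (c * c₀⁻¹)⁻¹ = c * b * c⁻¹ := by group
    rw [Equiv.coe_mulRight, Subgroup.mem_centralizer_singleton_iff,
      ← mul_inv_eq_iff_eq_mul (b := c * c₀⁻¹), hconj]
  · have : IsEmpty {c // c * b * c⁻¹ = a} :=
      ⟨fun c => h (isConj_comm.mp (isConj_iff.mpr ⟨c, c.2⟩))⟩
    exact Nat.card_of_isEmpty

theorem sum_card_conj_smul [Fintype G] {M : Type*} [AddCommMonoid M] (a : G) (φ : G → M) :
    ∑ x, Nat.card {c // c * x * c⁻¹ = a} • φ x = ∑ c, φ (c⁻¹ * a * c) := by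
  classical
  simp_rw [Nat.card_eq_fintype_card, Fintype.card_subtype, card_filter, sum_smul, ite_smul,
    one_smul, zero_smul]
  rw [sum_comm]
  refine sum_congr rfl fun c _ => ?_
  have hx : ∀ x, c * x * c⁻¹ = a ↔ x = c⁻¹ * a * c := fun x => by
    constructor <;> rintro rfl <;> group
  simp_rw [hx, sum_ite_eq', mem_univ, if_true]

end Conjugation

namespace QuotientGroup

variable {H : Type*} [Group H] (G : Subgroup H) [G.Normal] {s : H ⧸ G → H}
  (hs : ∀ q, (s q : H ⧸ G) = q)
include hs

theorem mk_mul_section (q : H ⧸ G) (u : G) : ((u * s q : H) : H ⧸ G) = q := by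
  rw [mk_mul, (eq_one_iff _).mpr u.2, one_mul, hs]

noncomputable def prodEquivOfSection : (H ⧸ G) × G ≃ H where
  toFun p := p.2 * s p.1
  invFun h := (h, ⟨h / s h, eq_iff_div_mem.mp (hs _).symm⟩)
  left_inv := fun ⟨q, u⟩ => by
    ext
    · exact mk_mul_section G hs q u
    · simp [mk_mul_section G hs q u]
  right_inv h := div_mul_cancel h (s h)

theorem sum_eq_sum_sum_mul_section {M : Type*} [AddCommMonoid M] [Fintype H] [Fintype (H ⧸ G)]
    [Fintype G] (φ : H → M) : ∑ h, φ h = ∑ q, ∑ u : G, φ (u * s q) := by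
  rw [← Fintype.sum_prod_type']
  exact (Fintype.sum_equiv (prodEquivOfSection G hs) _ _ fun _ => rfl).symm

theorem card_conj_eq_sum_card_conj [Fintype H] [Fintype (H ⧸ G)] [Fintype G] (a b : G) :
    Nat.card {h : H // h * b * h⁻¹ = a} =
      ∑ q, Nat.card {u : G //
        u * ⟨s q * b * (s q)⁻¹, Subgroup.Normal.conj_mem ‹_› _ b.2 _⟩ * u⁻¹ = a} := by
  classical
  simp_rw [Nat.card_eq_fintype_card, Fintype.card_subtype, card_filter]
  rw [sum_eq_sum_sum_mul_section G hs]
  refine sum_congr rfl fun q _ => sum_congr rfl fun u _ => ?_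
  have hconj : (u * s q : H) * b * (u * s q)⁻¹ = u * (s q * b * (s q)⁻¹) * (u : H)⁻¹ := by group
  simp only [hconj, Subtype.ext_iff, Subgroup.coe_mul, Subgroup.coe_inv]

end QuotientGroup

theorem MonoidAlgebra.sum_single_mem_center {k G : Type*} [CommSemiring k] [Group G] [Fintype G]
    {f : G → k} (hf : ∀ g x, f (g * x * g⁻¹) = f x) :
    ∑ x, single x (f x) ∈ Submonoid.center k[G] := by
  rw [Submonoid.mem_center_iff]
  intro a
  induction a using MonoidAlgebra.induction_linear with
  | zero => simp
  | add a b ha hb => rw [add_mul, mul_add, ha, hb]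
  | single g r =>
    rw [Finset.mul_sum, Finset.sum_mul]
    refine Fintype.sum_bijective (fun x => g * x * g⁻¹) (MulAut.conj g).bijective _ _ fun x => ?_
    simp only [single_mul_single, hf, inv_mul_cancel_right, mul_comm r]

theorem IsSemisimpleRing.eq_zero_of_forall_simple_mul_eq_zero {R : Type*} [Ring R]
    [IsSemisimpleRing R] {r : R}
    (h : ∀ S : Submodule R R, IsSimpleModule R S → ∀ s ∈ S, r * s = 0) : r = 0 := by
  have : r ∈ (⊤ : Submodule R R).annihilator := by
    rw [← IsSemisimpleModule.sSup_simples_eq_top, sSup_eq_iSup', Submodule.annihilator_iSup,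
      Submodule.mem_iInf]
    exact fun S => Submodule.mem_annihilator.mpr (h S S.2)
  simpa using Submodule.mem_annihilator.mp this 1 Submodule.mem_top

namespace Representation

section OfModule

variable {k G M : Type*} [CommSemiring k] [Monoid G] [AddCommMonoid M] [Module k M]
  [Module k[G] M] [IsScalarTower k k[G] M]

theorem asAlgebraHom_ofModule' (z : k[G]) (m : M) :
    (ofModule' (k := k) (G := G) M).asAlgebraHom z m = z • m := by
  simp [ofModule', asAlgebraHom_def]

noncomputable def subrepresentationOfModule'OrderIso :
    Subrepresentation (ofModule' (k := k) (G := G) M) ≃o Submodule k[G] M where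
  toFun σ :=
    { toAddSubmonoid := σ.toSubmodule.toAddSubmonoid
      smul_mem' z m hm := by
        induction z using MonoidAlgebra.induction_linear with
        | zero => simp
        | add z w hz hw => rw [add_smul]; exact σ.toSubmodule.add_mem hz hw
        | single g a =>
          rw [← mul_one a, ← smul_eq_mul, ← MonoidAlgebra.smul_single, smul_assoc]
          exact σ.toSubmodule.smul_mem a (σ.apply_mem_toSubmodule g hm) }
  invFun N := ⟨N.restrictScalars k, fun g _ hm => N.smul_mem _ hm⟩
  left_inv _ := rfl
  right_inv _ := rfl
  map_rel_iff' := Iff.rfl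

end OfModule

instance isIrreducible_ofModule' {k G M : Type*} [Field k] [Monoid G] [AddCommGroup M]
    [Module k M] [Module k[G] M] [IsScalarTower k k[G] M] [IsSimpleModule k[G] M] :
    IsIrreducible (ofModule' (k := k) (G := G) M) :=
  subrepresentationOfModule'OrderIso.isSimpleOrder_iff.mpr ((isSimpleModule_iff _ _).mp ‹_›)

theorem IsIrreducible.asAlgebraHom_eq_zero_of_trace_eq_zero {k G V : Type*} [Field k]
    [IsAlgClosed k] [CharZero k] [Monoid G] [AddCommGroup V] [Module k V] [FiniteDimensional k V]
    (ρ : Representation k G V) [ρ.IsIrreducible] {z : k[G]} (hz : z ∈ Submonoid.center k[G])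
    (htr : LinearMap.trace k V (ρ.asAlgebraHom z) = 0) : ρ.asAlgebraHom z = 0 := by
  obtain ⟨c, hc⟩ := (algebraMap_intertwiningMap_bijective_of_isAlgClosed (ρ := ρ)).2
    (IntertwiningMap.centralAlgebraMul ρ hz)
  have hz : ρ.asAlgebraHom z = c • LinearMap.id := congrArg IntertwiningMap.toLinearMap hc.symm
  have : Nontrivial V := IsSimpleModule.nontrivial k[G] ρ.asModule
  rw [hz, map_smul, LinearMap.trace_id, smul_eq_mul, mul_eq_zero] at htr
  simp [hz, htr.resolve_right (by simp [Module.finrank_pos.ne'])]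

end Representation

namespace FDRep

theorem simple_of_isIrreducible {k G V : Type u} [Field k] [IsAlgClosed k] [Group G] [Finite G]
    [NeZero (Nat.card G : k)] [AddCommGroup V] [Module k V] [FiniteDimensional k V]
    (ρ : Representation k G V) [ρ.IsIrreducible] : Simple (FDRep.of ρ) := by
  rw [simple_iff_end_is_rank_one, ← (forget₂HomLinearEquiv _ _).finrank_eq,
    (Rep.homLinearEquiv _ _).finrank_eq]
  exact Representation.IsIrreducible.finrank_intertwiningMap_self ρ

variable {k G : Type u} [Field k] [IsAlgClosed k] [CharZero k] [Group G] [Fintype G]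

theorem eq_zero_of_forall_simple_sum_mul_character_inv_eq_zero {f : G → k}
    (hf : ∀ g x, f (g * x * g⁻¹) = f x)
    (horth : ∀ V : FDRep k G, Simple V → ∑ x, f x * V.character x⁻¹ = 0) : f = 0 := by
  set z : k[G] := ∑ x, MonoidAlgebra.single x (f x⁻¹)
  have hz : z ∈ Submonoid.center k[G] :=
    MonoidAlgebra.sum_single_mem_center fun g x => by simpa [mul_assoc] using hf g x⁻¹
  have hz0 : z = 0 := by
    refine IsSemisimpleRing.eq_zero_of_forall_simple_mul_eq_zero fun S _ s hs => ?_
    let ρ := Representation.ofModule' (k := k) (G := G) S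
    have htr : LinearMap.trace k S (ρ.asAlgebraHom z) = 0 := by
      rw [← horth (FDRep.of ρ) (simple_of_isIrreducible ρ)]
      simp only [z, map_sum, Representation.asAlgebraHom_single, map_smul, smul_eq_mul]
      exact Fintype.sum_equiv (Equiv.inv G) _ _ fun x => by simp [FDRep.character]
    have := LinearMap.congr_fun
      (Representation.IsIrreducible.asAlgebraHom_eq_zero_of_trace_eq_zero ρ hz htr) ⟨s, hs⟩
    rw [Representation.asAlgebraHom_ofModule'] at this
    exact congrArg Subtype.val this
  classical
  funext x
  simpa [z, MonoidAlgebra.coeff_sum, MonoidAlgebra.coeff_single, Finsupp.single_apply] using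
    congrArg (fun w : k[G] => w.coeff x⁻¹) hz0

section Orthogonality

variable {ι : Type*} (ρ : ι → FDRep k G) (hsimple : ∀ i, Simple (ρ i))
  (hdistinct : ∀ i j, i ≠ j → IsEmpty (ρ i ≅ ρ j))
  (hcomplete : ∀ V : FDRep k G, Simple V → ∃ i, Nonempty (V ≅ ρ i))
include hsimple hdistinct

theorem sum_character_mul_character_inv [DecidableEq ι] (i j : ι) :
    ∑ x, (ρ i).character x * (ρ j).character x⁻¹ = if i = j then (Fintype.card G : k) else 0 := by
  classical
  have := hsimple i
  have := hsimple j
  have := invertibleOfNonzero (NeZero.ne (Nat.card G : k))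
  rw [← mul_inv_cancel_left₀ (NeZero.ne (Nat.card G : k)) (∑ x, _), char_orthonormal]
  by_cases hij : i = j
  · subst hij
    simp [Nonempty.intro (Iso.refl (ρ i))]
  · simp [hij, not_nonempty_iff.mpr (hdistinct i j hij)]

include hcomplete in
theorem sum_character_inv_mul_character [Fintype ι] (a b : G) :
    ∑ i, (ρ i).character a⁻¹ * (ρ i).character b = Nat.card {c // c * b * c⁻¹ = a} := by
  classical
  set F : G → k := fun x =>
    ∑ i, (ρ i).character a⁻¹ * (ρ i).character x - Nat.card {c // c * x * c⁻¹ = a}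
  have hF : ∀ g x, F (g * x * g⁻¹) = F x := fun g x => by
    have hcard : Nat.card {c // c * (g * x * g⁻¹) * c⁻¹ = a} = Nat.card {c // c * x * c⁻¹ = a} :=
      Nat.card_congr ((Equiv.mulRight g).subtypeEquiv fun c => by simp [mul_assoc])
    simp only [F, char_conj, hcard]
  have horth : ∀ V : FDRep k G, Simple V → ∑ x, F x * V.character x⁻¹ = 0 := fun V hV => by
    obtain ⟨j, ⟨e⟩⟩ := hcomplete V hV
    have hrow : ∑ x, (∑ i, (ρ i).character a⁻¹ * (ρ i).character x) * (ρ j).character x⁻¹ =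
        Fintype.card G * (ρ j).character a⁻¹ := by
      simp_rw [sum_mul, mul_assoc]
      rw [sum_comm]
      simp_rw [← mul_sum, sum_character_mul_character_inv ρ hsimple hdistinct]
      simp [mul_comm]
    have hclass : ∑ x, (Nat.card {c // c * x * c⁻¹ = a} : k) * (ρ j).character x⁻¹ =
        Fintype.card G * (ρ j).character a⁻¹ := by
      have hinv : ∀ c : G, (c⁻¹ * a * c)⁻¹ = c⁻¹ * a⁻¹ * c⁻¹⁻¹ := fun c => by group
      simp_rw [← nsmul_eq_mul, sum_card_conj_smul a fun x => (ρ j).character x⁻¹, hinv, char_conj,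
        sum_const, card_univ]
    simp only [F, char_iso e, sub_mul, sum_sub_distrib, hrow, hclass, sub_self]
  exact sub_eq_zero.mp (congrFun (eq_zero_of_forall_simple_sum_mul_character_inv_eq_zero hF horth) b)

end Orthogonality

end FDRep

open scoped Classical in
theorem generalized_orthogonality
    {H : Type} [Group H] [Fintype H]
    (G : Subgroup H) (hN : G.Normal)
    (s : H ⧸ G → H) (hs : ∀ q, QuotientGroup.mk' G (s q) = q)
    {ι : Type} [Fintype ι] (ρ : ι → FDRep ℂ ↥G)
    (hsimple : ∀ i, Simple (ρ i))
    (hdistinct : ∀ i i', i ≠ i' → IsEmpty (ρ i ≅ ρ i'))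
    (hcomplete : ∀ W : FDRep ℂ ↥G, Simple W → ∃ i, Nonempty (W ≅ ρ i))
    (g₁ g₂ : ↥G) :
    (∑ i : ι, ∑ q : H ⧸ G,
        (ρ i).character g₁⁻¹ *
          (ρ i).character ⟨s q * ↑g₂ * (s q)⁻¹, hN.conj_mem ↑g₂ g₂.2 (s q)⟩) =
      if IsConj (g₁ : H) (g₂ : H) then
        (Fintype.card (Subgroup.centralizer ({(g₁ : H)} : Set H)) : ℂ)
      else 0 := by
  rw [sum_comm]
  simp_rw [FDRep.sum_character_inv_mul_character ρ hsimple hdistinct hcomplete]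
  rw [← Nat.cast_sum, ← QuotientGroup.card_conj_eq_sum_card_conj G hs, card_conj_eq_ite,
    Nat.card_eq_fintype_card]
  split_ifs <;> simp
end

section
/- Let G be a normal subgroup of a finite group H with quotient map j: H → Q, and fix a section s of j with s(1)=1 and cocycle τ(q₁,q₂) = s(q₁)s(q₂)s(q₁q₂)⁻¹. Suppose G is central in H (so in particular G is abelian and Q acts trivially on G). Then for q ∈ Q, the number of conjugacy classes of H contained in j⁻¹(⟨q⟩) equals the number of characters χ ∈ Ĝ such that χ(τ(q₁,q)·τ(q,q₁)⁻¹) = 1 for all q₁ in the centralizer C(q) of q in Q. -/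
/-!
Let `j : H → H ⧸ G` and pick `x` with `j x = q`. Every conjugacy class of `H` lying over the class
of `q` meets the fibre `j⁻¹(q) = G x`, and as `G` is central, `h (g x) h⁻¹ = g ⁅h, x⁆ x`. So `g x`
and `g' x` are conjugate iff `g⁻¹ g'` lies in the subgroup `K ≤ G` of commutators `⁅h, x⁆` with
`j h ∈ C(q)`, and these classes are counted by `[G : K]`. For `q₁ ∈ C(q)` the quotient
`τ(q₁, q) τ(q, q₁)⁻¹` is `⁅s q₁, s q⁆`, so the characters in question are those trivial on `K`, and
by duality for the finite abelian group `G` there are `[G : K]` of them.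
-/

open scoped IsMulCommutative commutatorElement

lemma card_monoidHom_forall_eq_one_eq_index {A M : Type*} [CommGroup A] [Finite A] [CommMonoid M]
    [HasEnoughRootsOfUnity M (Monoid.exponent A)] (K : Subgroup A) :
    Nat.card {χ : A →* Mˣ // ∀ a ∈ K, χ a = 1} = K.index :=
  (Nat.card_congr (Equiv.subtypeEquivRight fun χ =>
    (CommGroup.mem_subgroupOrderIsoSubgroupMonoidHom_iff M K χ).symm)).trans
    (CommGroup.card_subgroupOrderIsoSubgroupMonoidHom M K)

section CentralExtension

variable {H : Type*} [Group H]

lemma cocycle_mul_inv_swap_eq_commutatorElement {Q : Type*} [Group Q] (s : Q → H) {q₁ q₂ : Q}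
    (h : Commute q₁ q₂) :
    s q₁ * s q₂ * (s (q₁ * q₂))⁻¹ * (s q₂ * s q₁ * (s (q₂ * q₁))⁻¹)⁻¹ = ⁅s q₁, s q₂⁆ := by
  rw [h.eq, commutatorElement_def]
  group

variable {G : Subgroup H}

lemma mul_comm_of_mem_of_le_center (hG : G ≤ Subgroup.center H) {g : H} (hg : g ∈ G) (h : H) :
    g * h = h * g :=
  (Subgroup.mem_center_iff.mp (hG hg) h).symm

lemma commutatorElement_eq_of_mk_eq (hG : G ≤ Subgroup.center H) {h h' : H}
    (hh : (h : H ⧸ G) = h') (x : H) : ⁅h, x⁆ = ⁅h', x⁆ := by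
  obtain ⟨g, hg, rfl⟩ : ∃ g ∈ G, h * g = h' := ⟨h⁻¹ * h', QuotientGroup.eq.mp hh, by group⟩
  calc ⁅h, x⁆ = h * (g * x * g⁻¹) * h⁻¹ * x⁻¹ := by
        rw [mul_comm_of_mem_of_le_center hG hg, commutatorElement_def]; group
    _ = ⁅h * g, x⁆ := by rw [commutatorElement_def]; group

lemma conj_mul_eq_mul_commutatorElement_mul (hG : G ≤ Subgroup.center H) {g : H} (hg : g ∈ G)
    (h x : H) : h * (g * x) * h⁻¹ = g * (⁅h, x⁆ * x) := by
  calc h * (g * x) * h⁻¹ = g * h * x * h⁻¹ := by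
        rw [mul_comm_of_mem_of_le_center hG hg h]; group
    _ = g * (⁅h, x⁆ * x) := by rw [commutatorElement_def]; group

variable [G.Normal]

lemma commutatorElement_mem_iff_commute {h x : H} :
    ⁅h, x⁆ ∈ G ↔ Commute (h : H ⧸ G) x := by
  rw [← QuotientGroup.eq_one_iff, ← commutatorElement_eq_one_iff_commute]
  rfl

/-- Multiplicative because `G` is central: `⁅h₁ h₂, x⁆ = h₁ ⁅h₂, x⁆ h₁⁻¹ ⁅h₁, x⁆`. -/
def commutatorHom (hG : G ≤ Subgroup.center H) (x : H) :
    (Subgroup.centralizer {(x : H ⧸ G)}).comap (QuotientGroup.mk' G) →* G where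
  toFun h := ⟨⁅(h : H), x⁆, commutatorElement_mem_iff_commute.mpr
    (Subgroup.mem_centralizer_singleton_iff.mp h.2)⟩
  map_one' := by ext; simp
  map_mul' h₁ h₂ := by
    have h₂G : ⁅(h₂ : H), x⁆ ∈ G := commutatorElement_mem_iff_commute.mpr
      (Subgroup.mem_centralizer_singleton_iff.mp h₂.2)
    ext
    calc ⁅(h₁ : H) * h₂, x⁆ = h₁ * (⁅(h₂ : H), x⁆ * x) * (h₁ : H)⁻¹ * x⁻¹ := by
          simp only [commutatorElement_def]; group
      _ = ⁅(h₂ : H), x⁆ * ⁅(h₁ : H), x⁆ := by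
          rw [conj_mul_eq_mul_commutatorElement_mul hG h₂G, commutatorElement_def]; group
      _ = ⁅(h₁ : H), x⁆ * ⁅(h₂ : H), x⁆ := mul_comm_of_mem_of_le_center hG h₂G _

lemma mem_range_commutatorHom (hG : G ≤ Subgroup.center H) {x : H} {g : G} :
    g ∈ (commutatorHom hG x).range ↔ ∃ h : H, ⁅h, x⁆ = g := by
  constructor
  · rintro ⟨h, rfl⟩
    exact ⟨h, rfl⟩
  · rintro ⟨h, hh⟩
    have hhG : ⁅h, x⁆ ∈ G := hh ▸ g.2
    exact ⟨⟨h, Subgroup.mem_centralizer_singleton_iff.mpr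
      (commutatorElement_mem_iff_commute.mp hhG)⟩, Subtype.ext hh⟩

lemma mem_range_commutatorHom_iff_exists_section (hG : G ≤ Subgroup.center H) {s : H ⧸ G → H}
    (hs : ∀ q, QuotientGroup.mk' G (s q) = q) {x : H} {g : G} :
    g ∈ (commutatorHom hG x).range ↔
      ∃ q₁ ∈ Subgroup.centralizer {(x : H ⧸ G)}, ⁅s q₁, x⁆ = g := by
  constructor
  · rintro ⟨h, rfl⟩
    exact ⟨_, h.2, commutatorElement_eq_of_mk_eq hG (hs _) x⟩
  · rintro ⟨q₁, -, hq₁⟩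
    exact (mem_range_commutatorHom hG).mpr ⟨s q₁, hq₁⟩

lemma isConj_mul_iff_inv_mul_mem_range (hG : G ≤ Subgroup.center H) (x : H) (g g' : G) :
    IsConj ((g : H) * x) (g' * x) ↔ g⁻¹ * g' ∈ (commutatorHom hG x).range := by
  rw [isConj_iff, mem_range_commutatorHom]
  refine exists_congr fun h => ?_
  rw [conj_mul_eq_mul_commutatorElement_mul hG g.2, ← mul_assoc, mul_left_inj,
    ← eq_inv_mul_iff_mul_eq, Subgroup.coe_mul, Subgroup.coe_inv]

lemma card_conjClasses_map_eq_index (hG : G ≤ Subgroup.center H) (x : H) :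
    Nat.card {c : ConjClasses H //
        ConjClasses.map (QuotientGroup.mk' G) c = ConjClasses.mk (x : H ⧸ G)} =
      (commutatorHom hG x).range.index := by
  let f : G → {c : ConjClasses H //
      ConjClasses.map (QuotientGroup.mk' G) c = ConjClasses.mk (x : H ⧸ G)} := fun g =>
    ⟨ConjClasses.mk (g * x), congrArg ConjClasses.mk <| by
      rw [QuotientGroup.mk'_apply, QuotientGroup.mk_mul, (QuotientGroup.eq_one_iff _).mpr g.2,
        one_mul]⟩
  have hf : Function.Surjective f := by
    rintro ⟨c, hc⟩
    obtain ⟨h, rfl⟩ := ConjClasses.exists_rep c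
    obtain ⟨y, hy⟩ := isConj_iff.mp (ConjClasses.mk_eq_mk_iff_isConj.mp hc)
    obtain ⟨y, rfl⟩ := QuotientGroup.mk_surjective y
    have hmem : y * h * y⁻¹ / x ∈ G := QuotientGroup.eq_iff_div_mem.mp hy
    refine ⟨⟨_, hmem⟩, Subtype.ext ?_⟩
    change ConjClasses.mk (y * h * y⁻¹ / x * x) = ConjClasses.mk h
    rw [div_mul_cancel, ConjClasses.mk_eq_mk_iff_isConj, isConj_iff]
    exact ⟨y⁻¹, by group⟩
  have hker : ∀ g g',
      Setoid.ker f g g' ↔ QuotientGroup.leftRel (commutatorHom hG x).range g g' := by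
    intro g g'
    rw [Setoid.ker_def, QuotientGroup.leftRel_apply, ← isConj_mul_iff_inv_mul_mem_range hG,
      Subtype.ext_iff, ConjClasses.mk_eq_mk_iff_isConj]
  exact Nat.card_congr ((Setoid.quotientKerEquivOfSurjective f hf).symm.trans
    (Quotient.congrRight hker))

end CentralExtension

theorem conjugacy_count_central_extension_general
    {H : Type*} [Group H] [Fintype H]
    (G : Subgroup H) [G.Normal] (hG : G ≤ Subgroup.center H)
    (s : H ⧸ G → H) (hs : ∀ q, QuotientGroup.mk' G (s q) = q)
    (τ : (H ⧸ G) → (H ⧸ G) → ↥G)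
    (hτ : ∀ q₁ q₂, (τ q₁ q₂ : H) = s q₁ * s q₂ * (s (q₁ * q₂))⁻¹)
    (q : H ⧸ G) :
    Nat.card {c : ConjClasses H //
        ConjClasses.map (QuotientGroup.mk' G) c = ConjClasses.mk q} =
      Nat.card {χ : ↥G →* ℂˣ //
        ∀ q₁ ∈ Subgroup.centralizer ({q} : Set (H ⧸ G)),
          χ (τ q₁ q * (τ q q₁)⁻¹) = 1} := by
  have hq : ((s q : H) : H ⧸ G) = q := hs q
  have : IsMulCommutative G :=
    .of_setLike_mul_comm fun a ha b _ => mul_comm_of_mem_of_le_center hG ha b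
  have : NeZero (Monoid.exponent G) := ⟨Monoid.exponent_ne_zero_of_finite⟩
  set K := (commutatorHom hG (s q)).range
  have hK : ∀ k : G, k ∈ K ↔ ∃ q₁ ∈ Subgroup.centralizer {q}, τ q₁ q * (τ q q₁)⁻¹ = k := by
    intro k
    rw [mem_range_commutatorHom_iff_exists_section hG hs, hq]
    refine exists_congr fun q₁ => and_congr_right fun hq₁ => ?_
    rw [Subtype.ext_iff, Subgroup.coe_mul, Subgroup.coe_inv, hτ, hτ,
      cocycle_mul_inv_swap_eq_commutatorElement s (Subgroup.mem_centralizer_singleton_iff.mp hq₁)]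
  calc _ = K.index := hq ▸ card_conjClasses_map_eq_index hG (s q)
    _ = Nat.card {χ : G →* ℂˣ // ∀ k ∈ K, χ k = 1} :=
      (card_monoidHom_forall_eq_one_eq_index K).symm
    _ = _ := by simp only [hK, forall_exists_index, and_imp, forall_apply_eq_imp_iff₂]

theorem conjugacy_count_central_extension
    {H : Type*} [Group H] [Fintype H]
    (G : Subgroup H) [G.Normal] (hG : G ≤ Subgroup.center H)
    (s : H ⧸ G → H) (hs : ∀ q, QuotientGroup.mk' G (s q) = q) (hs1 : s 1 = 1)
    (τ : (H ⧸ G) → (H ⧸ G) → ↥G)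
    (hτ : ∀ q₁ q₂, (τ q₁ q₂ : H) = s q₁ * s q₂ * (s (q₁ * q₂))⁻¹)
    (q : H ⧸ G) :
    Nat.card {c : ConjClasses H //
        ConjClasses.map (QuotientGroup.mk' G) c = ConjClasses.mk q} =
      Nat.card {χ : ↥G →* ℂˣ //
        ∀ q₁ ∈ Subgroup.centralizer ({q} : Set (H ⧸ G)),
          χ (τ q₁ q * (τ q q₁)⁻¹) = 1} :=
  conjugacy_count_central_extension_general G hG s hs τ hτ q
end

section
/- Let G be a normal subgroup of a finite group H with quotient Q, section s of the quotient map, and cocycle τ. Fix representatives ρ: G → End(V_ρ) of classes in Ĝ and unitary intertwiners T_q^{[ρ]}: V_ρ → V_{q([ρ])} satisfying ρ(s(q) g s(q)⁻¹) = (T_q^{[ρ]})⁻¹ ∘ q([ρ])(g) ∘ T_q^{[ρ]} for all g ∈ G. Then for all q₁, q₂ ∈ Q and [ρ] ∈ Ĝ, the composite T_{q₂}^{q₁([ρ])} ∘ T_{q₁}^{[ρ]} ∘ ρ(τ(q₁,q₂)) ∘ (T_{q₁q₂}^{[ρ]})⁻¹ is a scalar multiple c^{[ρ]}(q₁,q₂)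 of the identity on V_{q₁q₂([ρ])}, with c^{[ρ]}(q₁,q₂) ∈ U(1). -/
/-!
The composite `S = T₂ ∘ T₁ ∘ ρ₁(τ) ∘ T₁₂⁻¹` is an endomorphism of `V₃`. Since
`τ · s(q₁q₂) g s(q₁q₂)⁻¹ = s(q₁) s(q₂) g s(q₂)⁻¹ s(q₁)⁻¹ · τ`, the three intertwining relations
show that `S` commutes with `ρ₃`, so by Schur's lemma it is a scalar `c`. As `S` is a composite of
isometries, `|c| = 1`.
-/

namespace Representation

variable {k G V : Type*} [Field k] [Monoid G] [AddCommGroup V] [Module k V]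

theorem isIrreducible_of_forall_submodule [Nontrivial V] (ρ : Representation k G V)
    (hirr : ∀ W : Submodule k V, (∀ g, ∀ v ∈ W, ρ g v ∈ W) → W = ⊥ ∨ W = ⊤) :
    IsIrreducible ρ where
  exists_pair_ne := ⟨⊥, ⊤, fun h => bot_ne_top (congrArg Subrepresentation.toSubmodule h)⟩
  eq_bot_or_eq_top σ := (hirr σ.toSubmodule σ.apply_mem_toSubmodule).imp
    (fun h => Subrepresentation.toSubmodule_injective h)
    (fun h => Subrepresentation.toSubmodule_injective h)

theorem exists_eq_smul_of_commute [IsAlgClosed k] [FiniteDimensional k V]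
    (ρ : Representation k G V) [IsIrreducible ρ] {S : Module.End k V}
    (hS : ∀ g, Commute S (ρ g)) : ∃ c : k, ∀ v, S v = c • v := by
  obtain ⟨c, hc⟩ := IsIrreducible.algebraMap_intertwiningMap_bijective_of_isAlgClosed.2
    (⟨S, hS⟩ : IntertwiningMap ρ ρ)
  exact ⟨c, fun v => (DFunLike.congr_fun hc v).symm⟩

end Representation

section TwistedIntertwiners

variable {k N V₁ V₂ V₃ : Type*} [CommSemiring k] [Monoid N]
  [AddCommMonoid V₁] [Module k V₁] [AddCommMonoid V₂] [Module k V₂]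
  [AddCommMonoid V₃] [Module k V₃]

theorem commute_comp_intertwiners_of_twist (ρ₁ : Representation k N V₁)
    (ρ₂ : Representation k N V₂) (ρ₃ : Representation k N V₃) {φ₁ φ₂ φ₁₂ : N → N} {t : N}
    (ht : ∀ g, t * φ₁₂ g = φ₁ (φ₂ g) * t)
    {T₁ : V₁ ≃ₗ[k] V₂} {T₂ : V₂ ≃ₗ[k] V₃} {T₁₂ : V₁ ≃ₗ[k] V₃}
    (hT₁ : ∀ g v, T₁ (ρ₁ (φ₁ g) v) = ρ₂ g (T₁ v))
    (hT₂ : ∀ g v, T₂ (ρ₂ (φ₂ g) v) = ρ₃ g (T₂ v))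
    (hT₁₂ : ∀ g v, T₁₂ (ρ₁ (φ₁₂ g) v) = ρ₃ g (T₁₂ v)) (g : N) :
    Commute (T₂.toLinearMap ∘ₗ T₁.toLinearMap ∘ₗ ρ₁ t ∘ₗ T₁₂.symm.toLinearMap) (ρ₃ g) := by
  refine LinearMap.ext fun w => ?_
  have hT₁₂' : T₁₂.symm (ρ₃ g w) = ρ₁ (φ₁₂ g) (T₁₂.symm w) := by
    rw [LinearEquiv.symm_apply_eq, hT₁₂, LinearEquiv.apply_symm_apply]
  calc T₂ (T₁ (ρ₁ t (T₁₂.symm (ρ₃ g w))))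
      = T₂ (T₁ (ρ₁ (t * φ₁₂ g) (T₁₂.symm w))) := by rw [hT₁₂', map_mul, Module.End.mul_apply]
    _ = T₂ (T₁ (ρ₁ (φ₁ (φ₂ g)) (ρ₁ t (T₁₂.symm w)))) := by
        rw [ht, map_mul, Module.End.mul_apply]
    _ = ρ₃ g (T₂ (T₁ (ρ₁ t (T₁₂.symm w)))) := by rw [hT₁, hT₂]

end TwistedIntertwiners

theorem intertwiner_composite_is_unit_scalar_general
    {H : Type*} [Group H]
    (G : Subgroup H) (hN : G.Normal)
    (s : H ⧸ G → H)
    (q₁ q₂ : H ⧸ G)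
    (hτ : s q₁ * s q₂ * (s (q₁ * q₂))⁻¹ ∈ G)
    {V₁ V₂ V₃ : Type*}
    [NormedAddCommGroup V₁] [InnerProductSpace ℂ V₁]
    [NormedAddCommGroup V₂] [InnerProductSpace ℂ V₂]
    [NormedAddCommGroup V₃] [InnerProductSpace ℂ V₃] [FiniteDimensional ℂ V₃]
    [Nontrivial V₃]
    (ρ₁ : Representation ℂ ↥G V₁) (ρ₂ : Representation ℂ ↥G V₂)
    (ρ₃ : Representation ℂ ↥G V₃)
    -- the representations are unitary
    (hu₁ : ∀ (g : ↥G) (v : V₁), ‖ρ₁ g v‖ = ‖v‖)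
    -- the representations are irreducible
    (hirr₃ : ∀ W : Submodule ℂ V₃, (∀ (g : ↥G), ∀ v ∈ W, ρ₃ g v ∈ W) → W = ⊥ ∨ W = ⊤)
    -- unitary intertwiners: ρ₂ = q₁([ρ₁]), ρ₃ = q₂(q₁([ρ₁])) = (q₁q₂)([ρ₁])
    (T₁ : V₁ ≃ₗᵢ[ℂ] V₂) (T₂ : V₂ ≃ₗᵢ[ℂ] V₃) (T₁₂ : V₁ ≃ₗᵢ[ℂ] V₃)
    (hT₁ : ∀ (g : ↥G) (v : V₁),
      T₁ (ρ₁ ⟨s q₁ * ↑g * (s q₁)⁻¹, hN.conj_mem ↑g g.2 (s q₁)⟩ v) = ρ₂ g (T₁ v))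
    (hT₂ : ∀ (g : ↥G) (v : V₂),
      T₂ (ρ₂ ⟨s q₂ * ↑g * (s q₂)⁻¹, hN.conj_mem ↑g g.2 (s q₂)⟩ v) = ρ₃ g (T₂ v))
    (hT₁₂ : ∀ (g : ↥G) (v : V₁),
      T₁₂ (ρ₁ ⟨s (q₁ * q₂) * ↑g * (s (q₁ * q₂))⁻¹,
          hN.conj_mem ↑g g.2 (s (q₁ * q₂))⟩ v) = ρ₃ g (T₁₂ v)) :
    ∃ c : ℂ, ‖c‖ = 1 ∧
      ∀ v : V₁, T₂ (T₁ (ρ₁ ⟨s q₁ * s q₂ * (s (q₁ * q₂))⁻¹, hτ⟩ v)) = c • T₁₂ v := by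
  have hcocycle : ∀ g : G, (⟨s q₁ * s q₂ * (s (q₁ * q₂))⁻¹, hτ⟩ : G) *
      ⟨s (q₁ * q₂) * g * (s (q₁ * q₂))⁻¹, hN.conj_mem g g.2 (s (q₁ * q₂))⟩ =
      ⟨s q₁ * (s q₂ * g * (s q₂)⁻¹) * (s q₁)⁻¹, hN.conj_mem _ (hN.conj_mem g g.2 (s q₂)) (s q₁)⟩ *
      ⟨s q₁ * s q₂ * (s (q₁ * q₂))⁻¹, hτ⟩ :=
    fun g => Subtype.ext (by simp only [Subgroup.coe_mul]; group)
  have : ρ₃.IsIrreducible := Representation.isIrreducible_of_forall_submodule ρ₃ hirr₃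
  obtain ⟨c, hc⟩ := Representation.exists_eq_smul_of_commute ρ₃
    (commute_comp_intertwiners_of_twist ρ₁ ρ₂ ρ₃ hcocycle (T₁ := T₁.toLinearEquiv)
      (T₂ := T₂.toLinearEquiv) (T₁₂ := T₁₂.toLinearEquiv) hT₁ hT₂ hT₁₂)
  refine ⟨c, ?_, fun v => by simpa using hc (T₁₂ v)⟩
  obtain ⟨w, hw⟩ := exists_ne (0 : V₃)
  refine (mul_eq_right₀ (norm_ne_zero_iff.mpr hw)).1 ?_
  rw [← norm_smul, ← hc]
  simp [hu₁]

theorem intertwiner_composite_is_unit_scalar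
    {H : Type*} [Group H] [Fintype H]
    (G : Subgroup H) (hN : G.Normal)
    (s : H ⧸ G → H) (hs : ∀ q, QuotientGroup.mk' G (s q) = q) (hs1 : s 1 = 1)
    (q₁ q₂ : H ⧸ G)
    (hτ : s q₁ * s q₂ * (s (q₁ * q₂))⁻¹ ∈ G)
    {V₁ V₂ V₃ : Type*}
    [NormedAddCommGroup V₁] [InnerProductSpace ℂ V₁] [FiniteDimensional ℂ V₁]
    [NormedAddCommGroup V₂] [InnerProductSpace ℂ V₂] [FiniteDimensional ℂ V₂]
    [NormedAddCommGroup V₃] [InnerProductSpace ℂ V₃] [FiniteDimensional ℂ V₃]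
    [Nontrivial V₃]
    (ρ₁ : Representation ℂ ↥G V₁) (ρ₂ : Representation ℂ ↥G V₂)
    (ρ₃ : Representation ℂ ↥G V₃)
    -- the representations are unitary
    (hu₁ : ∀ (g : ↥G) (v : V₁), ‖ρ₁ g v‖ = ‖v‖)
    (hu₂ : ∀ (g : ↥G) (v : V₂), ‖ρ₂ g v‖ = ‖v‖)
    (hu₃ : ∀ (g : ↥G) (v : V₃), ‖ρ₃ g v‖ = ‖v‖)
    -- the representations are irreducible
    (hirr₁ : ∀ W : Submodule ℂ V₁, (∀ (g : ↥G), ∀ v ∈ W, ρ₁ g v ∈ W) → W = ⊥ ∨ W = ⊤)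
    (hirr₂ : ∀ W : Submodule ℂ V₂, (∀ (g : ↥G), ∀ v ∈ W, ρ₂ g v ∈ W) → W = ⊥ ∨ W = ⊤)
    (hirr₃ : ∀ W : Submodule ℂ V₃, (∀ (g : ↥G), ∀ v ∈ W, ρ₃ g v ∈ W) → W = ⊥ ∨ W = ⊤)
    -- unitary intertwiners: ρ₂ = q₁([ρ₁]), ρ₃ = q₂(q₁([ρ₁])) = (q₁q₂)([ρ₁])
    (T₁ : V₁ ≃ₗᵢ[ℂ] V₂) (T₂ : V₂ ≃ₗᵢ[ℂ] V₃) (T₁₂ : V₁ ≃ₗᵢ[ℂ] V₃)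
    (hT₁ : ∀ (g : ↥G) (v : V₁),
      T₁ (ρ₁ ⟨s q₁ * ↑g * (s q₁)⁻¹, hN.conj_mem ↑g g.2 (s q₁)⟩ v) = ρ₂ g (T₁ v))
    (hT₂ : ∀ (g : ↥G) (v : V₂),
      T₂ (ρ₂ ⟨s q₂ * ↑g * (s q₂)⁻¹, hN.conj_mem ↑g g.2 (s q₂)⟩ v) = ρ₃ g (T₂ v))
    (hT₁₂ : ∀ (g : ↥G) (v : V₁),
      T₁₂ (ρ₁ ⟨s (q₁ * q₂) * ↑g * (s (q₁ * q₂))⁻¹,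
          hN.conj_mem ↑g g.2 (s (q₁ * q₂))⟩ v) = ρ₃ g (T₁₂ v)) :
    ∃ c : ℂ, ‖c‖ = 1 ∧
      ∀ v : V₁, T₂ (T₁ (ρ₁ ⟨s q₁ * s q₂ * (s (q₁ * q₂))⁻¹, hτ⟩ v)) = c • T₁₂ v :=
  intertwiner_composite_is_unit_scalar_general G hN s q₁ q₂ hτ ρ₁ ρ₂ ρ₃ hu₁ hirr₃ T₁ T₂ T₁₂ hT₁ hT₂
    hT₁₂
end
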